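/- (Equivalence of Tarama and Kowaleskian energies.) Let c : [a,b] → ℝ be of class C¹ with Λ1 ≤ c(t) ≤ Λ2 for all t ∈ [a,b], where 0 < Λ1 ≤ Λ2, let c∞ ∈ [Λ1,Λ2], and let λ > 0 satisfy λ ≥ (1/2)|c'(t)|/c(t)^{3/2} for every t ∈ [a,b]. Then for every solution u of u''(t) + λ² c(t) u(t) = 0 on [a,b], the Tarama energy E_Tar(t) = u'(t)²/c(t)^{1/2} + λ² c(t)^{1/2} u(t)² + (1/2)(c'(t)/c(t)^{3/2}) u'(t) u(t) and the Kowaleskian energy E(t) = u'(t)²/√c∞ + λ²√c∞·u(t)² satisfy (1/2)(Λ1/Λ2)^{1/2} E(t) ≤ E_Tar(t) ≤ (3/2)(Λ2/Λ1)^{1/2} E(t) for all t ∈ [a,b]. -/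
import Mathlib


open Real Set MeasureTheory

/-- The Kowaleskian energy `E(t) = u'(t)²/√c∞ + λ²·√c∞·u(t)²`. -/
noncomputable def kowE (cinf lam : ℝ) (u u' : ℝ → ℝ) (t : ℝ) : ℝ :=
  (u' t) ^ 2 / Real.sqrt cinf + lam ^ 2 * Real.sqrt cinf * (u t) ^ 2

/-- The Tarama energy
`E_Tar(t) = u'(t)²/c(t)^{1/2} + λ² c(t)^{1/2} u(t)² + (1/2)(c'(t)/c(t)^{3/2}) u'(t) u(t)`. -/
noncomputable def tarE (c c' : ℝ → ℝ) (lam : ℝ) (u u' : ℝ → ℝ) (t : ℝ) : ℝ :=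
  (u' t) ^ 2 / Real.sqrt (c t) + lam ^ 2 * Real.sqrt (c t) * (u t) ^ 2 +
    (1 / 2) * (c' t / (c t) ^ ((3 : ℝ) / 2)) * u' t * u t

theorem tarama_kowaleskian_equivalence
    (a b Λ1 Λ2 cinf lam : ℝ) (hab : a ≤ b) (hΛ1 : 0 < Λ1) (hΛ12 : Λ1 ≤ Λ2)
    (hcinf : cinf ∈ Icc Λ1 Λ2) (hlam : 0 < lam)
    (c c' : ℝ → ℝ)
    (hc1 : ∀ t ∈ Icc a b, HasDerivWithinAt c (c' t) (Icc a b) t)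
    (hc1cont : ContinuousOn c' (Icc a b))
    (hbounds : ∀ t ∈ Icc a b, Λ1 ≤ c t ∧ c t ≤ Λ2)
    (hlam_ge : ∀ t ∈ Icc a b, (1 / 2) * |c' t| / (c t) ^ ((3 : ℝ) / 2) ≤ lam)
    (u u' : ℝ → ℝ)
    (hu : ∀ t ∈ Icc a b, HasDerivWithinAt u (u' t) (Icc a b) t)
    (hu' : ∀ t ∈ Icc a b, HasDerivWithinAt u' (-(lam ^ 2 * c t * u t)) (Icc a b) t) :
    ∀ t ∈ Icc a b,
      (1 / 2) * Real.sqrt (Λ1 / Λ2) * kowE cinf lam u u' t ≤ tarE c c' lam u u' t ∧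
      tarE c c' lam u u' t ≤ (3 / 2) * Real.sqrt (Λ2 / Λ1) * kowE cinf lam u u' t := by
  intro t ht
  obtain ⟨hL, hU⟩ := hbounds t ht
  have hs : 0 < c t := lt_of_lt_of_le hΛ1 hL
  have hA : 0 < Real.sqrt (c t) := Real.sqrt_pos.2 hs
  have hB : 0 < Real.sqrt cinf := Real.sqrt_pos.2 (lt_of_lt_of_le hΛ1 hcinf.1)
  have hP : 0 < Real.sqrt Λ1 := Real.sqrt_pos.2 hΛ1
  have hQ : 0 < Real.sqrt Λ2 := Real.sqrt_pos.2 (lt_of_lt_of_le hΛ1 hΛ12)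
  have hPA : Real.sqrt Λ1 ≤ Real.sqrt (c t) := Real.sqrt_le_sqrt hL
  have hAQ : Real.sqrt (c t) ≤ Real.sqrt Λ2 := Real.sqrt_le_sqrt hU
  have hPB : Real.sqrt Λ1 ≤ Real.sqrt cinf := Real.sqrt_le_sqrt hcinf.1
  have hBQ : Real.sqrt cinf ≤ Real.sqrt Λ2 := Real.sqrt_le_sqrt hcinf.2
  set x := u' t with hx
  set y := u t with hy
  have h32 : 0 < (c t) ^ ((3 : ℝ) / 2) := Real.rpow_pos_of_pos hs _
  have k1 : Real.sqrt Λ1 * Real.sqrt (c t) ≤ Real.sqrt cinf * Real.sqrt Λ2 :=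
    mul_le_mul hPB hAQ hA.le hB.le
  have k2 : Real.sqrt Λ1 * Real.sqrt cinf ≤ Real.sqrt (c t) * Real.sqrt Λ2 :=
    mul_le_mul hPA hBQ hB.le hA.le
  -- cross term bound
  have hcross : |(1 / 2) * (c' t / (c t) ^ ((3 : ℝ) / 2)) * x * y| ≤ lam * |x| * |y| := by
    have h := hlam_ge t ht
    rw [abs_mul, abs_mul]
    apply mul_le_mul_of_nonneg_right _ (abs_nonneg y)
    apply mul_le_mul_of_nonneg_right _ (abs_nonneg x)
    rw [abs_mul, show |(1/2 : ℝ)| = 1/2 from by norm_num, abs_div, abs_of_pos h32]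
    rw [mul_div_assoc] at h
    exact h
  have hcross' := abs_le.1 hcross
  -- AM-GM
  have hkey : 2 * (lam * |x| * |y|) ≤ x ^ 2 / Real.sqrt (c t) + lam ^ 2 * Real.sqrt (c t) * y ^ 2 := by
    have heq : x ^ 2 / Real.sqrt (c t) + lam ^ 2 * Real.sqrt (c t) * y ^ 2
        = (x ^ 2 + lam ^ 2 * (Real.sqrt (c t)) ^ 2 * y ^ 2) / Real.sqrt (c t) := by
      rw [div_add' _ _ _ hA.ne']; congr 1; ring
    rw [heq, le_div_iff₀ hA]
    have q1 : |x| ^ 2 = x ^ 2 := sq_abs x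
    have q2 : lam ^ 2 * (Real.sqrt (c t)) ^ 2 * |y| ^ 2
        = lam ^ 2 * (Real.sqrt (c t)) ^ 2 * y ^ 2 := by rw [sq_abs]
    have q3 := sq_nonneg (|x| - lam * Real.sqrt (c t) * |y|)
    linarith [q1, q2, q3]
  -- lower comparison
  have h1 : Real.sqrt (Λ1 / Λ2) * (x ^ 2 / Real.sqrt cinf + lam ^ 2 * Real.sqrt cinf * y ^ 2)
      ≤ x ^ 2 / Real.sqrt (c t) + lam ^ 2 * Real.sqrt (c t) * y ^ 2 := by
    rw [mul_add]
    apply add_le_add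
    · rw [Real.sqrt_div hΛ1.le, div_mul_div_comm, div_le_div_iff₀ (by positivity) hA]
      linarith [mul_le_mul_of_nonneg_left k1 (sq_nonneg x)]
    · rw [Real.sqrt_div hΛ1.le, div_mul_eq_mul_div, div_le_iff₀ hQ]
      linarith [mul_le_mul_of_nonneg_left k2 (mul_nonneg (sq_nonneg lam) (sq_nonneg y))]
  -- upper comparison
  have h2 : x ^ 2 / Real.sqrt (c t) + lam ^ 2 * Real.sqrt (c t) * y ^ 2
      ≤ Real.sqrt (Λ2 / Λ1) * (x ^ 2 / Real.sqrt cinf + lam ^ 2 * Real.sqrt cinf * y ^ 2) := by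
    rw [mul_add]
    apply add_le_add
    · rw [Real.sqrt_div (le_of_lt (lt_of_lt_of_le hΛ1 hΛ12)), div_mul_div_comm,
        div_le_div_iff₀ hA (by positivity)]
      linarith [mul_le_mul_of_nonneg_left k2 (sq_nonneg x)]
    · rw [Real.sqrt_div (le_of_lt (lt_of_lt_of_le hΛ1 hΛ12)), div_mul_eq_mul_div,
        le_div_iff₀ hP]
      linarith [mul_le_mul_of_nonneg_left k1 (mul_nonneg (sq_nonneg lam) (sq_nonneg y))]
  simp only [tarE, kowE, ← hx, ← hy]
  constructor
  · linarith [hcross'.1, hkey, h1]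
  · linarith [hcross'.2, hkey, h2]
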